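/- Validity transfer from neutral to utilitarian frames: for every formula φ ∈ L_TDS, if φ is valid on every TDS-model, then φ is valid on every TUS-model. -/

import Mathlib

/-! # Temporal Deontic STIT logic (TDS) — common definitions -/

/-- Formulas of the language L_TDS over a set `Ag` of agents, with propositional
variables indexed by `ℕ`. -/
inductive Formula (Ag : Type) : Type
  | var : ℕ → Formula Ag
  | neg : Formula Ag → Formula Ag
  | and : Formula Ag → Formula Ag → Formula Ag
  | box : Formula Ag → Formula Ag            -- □
  | agent : Ag → Formula Ag → Formula Ag     -- [i]
  | coal : Formula Ag → Formula Ag           -- [Ag]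
  | G : Formula Ag → Formula Ag
  | H : Formula Ag → Formula Ag
  | obl : Ag → Formula Ag → Formula Ag       -- ⊗_i

namespace Formula

variable {Ag : Type}

def impl (φ ψ : Formula Ag) : Formula Ag := neg (and φ (neg ψ))
def orf (φ ψ : Formula Ag) : Formula Ag := neg (and (neg φ) (neg ψ))
def diam (φ : Formula Ag) : Formula Ag := neg (box (neg φ))              -- ◇
def diamAg (i : Ag) (φ : Formula Ag) : Formula Ag := neg (agent i (neg φ)) -- ⟨i⟩
def diamCoal (φ : Formula Ag) : Formula Ag := neg (coal (neg φ))         -- ⟨Ag⟩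
def F (φ : Formula Ag) : Formula Ag := neg (G (neg φ))
def P (φ : Formula Ag) : Formula Ag := neg (H (neg φ))
def perm (i : Ag) (φ : Formula Ag) : Formula Ag := neg (obl i (neg φ))   -- ⊖_i
def bot : Formula Ag := and (var 0) (neg (var 0))
def verum : Formula Ag := neg bot

/-- name(p) := □¬p ∧ □(Gp ∧ Hp) -/
def nameF (p : ℕ) : Formula Ag :=
  and (box (neg (var p))) (box (and (G (var p)) (H (var p))))

/-- The propositional variable `p` occurs in the formula. -/
def occurs (p : ℕ) : Formula Ag → Prop
  | var q => p = q
  | neg φ => occurs p φ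
  | and φ ψ => occurs p φ ∨ occurs p ψ
  | box φ => occurs p φ
  | agent _ φ => occurs p φ
  | coal φ => occurs p φ
  | G φ => occurs p φ
  | H φ => occurs p φ
  | obl _ φ => occurs p φ

/-- Propositional (Boolean) evaluation of a formula, treating every formula whose
main connective is not `neg` or `and` as an atom valued by `v`. -/
def evalProp (v : Formula Ag → Bool) : Formula Ag → Bool
  | neg φ => ! evalProp v φ
  | and φ ψ => evalProp v φ && evalProp v ψ
  | φ => v φ

/-- φ is a propositional tautology. -/
def Tautology (φ : Formula Ag) : Prop := ∀ v : Formula Ag → Bool, evalProp v φ = true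

/-- Finite conjunction. -/
def bigAnd (l : List (Formula Ag)) : Formula Ag := l.foldr and verum

end Formula

/-- A fixed enumeration of the (finitely many) agents. -/
noncomputable def agList (Ag : Type) [Fintype Ag] : List Ag := Finset.univ.toList

open Formula in
/-- The Hilbert system TDS. -/
inductive Prv {Ag : Type} [Fintype Ag] : Formula Ag → Prop
  | taut {φ : Formula Ag} : Tautology φ → Prv φ
  -- S5 for □
  | kBox (φ ψ : Formula Ag) : Prv (impl (box (impl φ ψ)) (impl (box φ) (box ψ)))
  | tBox (φ : Formula Ag) : Prv (impl (box φ) φ)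
  | fiveBox (φ : Formula Ag) : Prv (impl (diam φ) (box (diam φ)))
  -- S5 for each [i]
  | kAg (i : Ag) (φ ψ : Formula Ag) :
      Prv (impl (agent i (impl φ ψ)) (impl (agent i φ) (agent i ψ)))
  | tAg (i : Ag) (φ : Formula Ag) : Prv (impl (agent i φ) φ)
  | fiveAg (i : Ag) (φ : Formula Ag) : Prv (impl (diamAg i φ) (agent i (diamAg i φ)))
  -- S5 for [Ag]
  | kCoal (φ ψ : Formula Ag) : Prv (impl (coal (impl φ ψ)) (impl (coal φ) (coal ψ)))
  | tCoal (φ : Formula Ag) : Prv (impl (coal φ) φ)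
  | fiveCoal (φ : Formula Ag) : Prv (impl (diamCoal φ) (coal (diamCoal φ)))
  -- A10 independence of agents
  | a10 (φs : Ag → Formula Ag) :
      Prv (impl (bigAnd ((agList Ag).map (fun i => diam (agent i (φs i)))))
                (diam (bigAnd ((agList Ag).map (fun i => agent i (φs i))))))
  -- A11
  | a11 (φs : Ag → Formula Ag) :
      Prv (impl (bigAnd ((agList Ag).map (fun i => agent i (φs i))))
                (coal (bigAnd ((agList Ag).map (fun i => φs i)))))
  -- A12 K for ⊗_i
  | a12 (i : Ag) (φ ψ : Formula Ag) :
      Prv (impl (obl i (impl φ ψ)) (impl (obl i φ) (obl i ψ)))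
  -- A13
  | a13 (i : Ag) (φ : Formula Ag) : Prv (impl (box φ) (and (agent i φ) (obl i φ)))
  -- A14
  | a14 (i : Ag) (φ : Formula Ag) : Prv (impl (obl i φ) (diam (agent i φ)))
  -- A15
  | a15 (i : Ag) (φ : Formula Ag) : Prv (impl (diam (obl i φ)) (box (obl i φ)))
  -- A16
  | a16 (i : Ag) (φ ψ : Formula Ag) :
      Prv (impl (box (impl (agent i φ) (agent i ψ))) (impl (obl i φ) (obl i ψ)))
  -- KD4 for G
  | kG (φ ψ : Formula Ag) : Prv (impl (G (impl φ ψ)) (impl (G φ) (G ψ)))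
  | fourG (φ : Formula Ag) : Prv (impl (G φ) (G (G φ)))
  | dG (φ : Formula Ag) : Prv (impl (G φ) (F φ))
  -- K for H
  | kH (φ ψ : Formula Ag) : Prv (impl (H (impl φ ψ)) (impl (H φ) (H ψ)))
  -- A21 - A25
  | a21 (φ : Formula Ag) : Prv (impl φ (G (P φ)))
  | a22 (φ : Formula Ag) : Prv (impl φ (H (F φ)))
  | a23 (φ : Formula Ag) : Prv (impl (F (P φ)) (orf (P φ) (orf φ (F φ))))
  | a24 (φ : Formula Ag) : Prv (impl (P (F φ)) (orf (P φ) (orf φ (F φ))))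
  | a25 (φ : Formula Ag) : Prv (impl (F (diam φ)) (diamCoal (F φ)))
  -- rules
  | mp {φ ψ : Formula Ag} : Prv (impl φ ψ) → Prv φ → Prv ψ
  | necBox {φ : Formula Ag} : Prv φ → Prv (box φ)
  | necG {φ : Formula Ag} : Prv φ → Prv (G φ)
  | necH {φ : Formula Ag} : Prv φ → Prv (H φ)
  | r2 {φ : Formula Ag} (p : ℕ) : ¬ occurs p φ → Prv (impl (nameF p) φ) → Prv φ

/-- Derivability from a set of premises (Def. 4.4 of Blackburn–de Rijke–Venema). -/
def SetProv {Ag : Type} [Fintype Ag] (Γ : Set (Formula Ag)) (φ : Formula Ag) : Prop :=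
  ∃ l : List (Formula Ag), (∀ ψ ∈ l, ψ ∈ Γ) ∧ Prv (l.foldr Formula.impl φ)

/-- Maximally consistent set. -/
def MCS {Ag : Type} [Fintype Ag] (Γ : Set (Formula Ag)) : Prop :=
  ¬ SetProv Γ Formula.bot ∧ ∀ Γ' : Set (Formula Ag), Γ ⊂ Γ' → SetProv Γ' Formula.bot

/-- The members of `Boxes`. -/
inductive BoxOp (Ag : Type) : Type
  | box : BoxOp Ag
  | coal : BoxOp Ag
  | G : BoxOp Ag
  | H : BoxOp Ag
  | agent : Ag → BoxOp Ag
  | obl : Ag → BoxOp Ag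

/-- Applying a box operator to a formula. -/
def BoxOp.apply {Ag : Type} : BoxOp Ag → Formula Ag → Formula Ag
  | .box, φ => .box φ
  | .coal, φ => .coal φ
  | .G, φ => .G φ
  | .H, φ => .H φ
  | .agent i, φ => .agent i φ
  | .obl i, φ => .obl i φ

/-- The dual diamond ⟨α⟩ of a box operator [α]. -/
def BoxOp.dual {Ag : Type} (α : BoxOp Ag) (φ : Formula Ag) : Formula Ag :=
  .neg (α.apply (.neg φ))

/-- Canonical relation: R^dt_[α] Γ Δ iff {φ : [α]φ ∈ Γ} ⊆ Δ. -/
def canR {Ag : Type} (α : BoxOp Ag) (Γ Δ : Set (Formula Ag)) : Prop :=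
  ∀ φ : Formula Ag, α.apply φ ∈ Γ → φ ∈ Δ

/-- Zig-zagging formula ⟨α₁⟩(φ₁ ∧ ⟨α₂⟩(φ₂ ∧ … ∧ ⟨αₙ⟩φₙ)…), where `l` lists the
outer pairs (αₖ, φₖ) for k < n and `(α, φ)` is the innermost pair (αₙ, φₙ). -/
def zigzag {Ag : Type} (l : List (BoxOp Ag × Formula Ag)) (α : BoxOp Ag)
    (φ : Formula Ag) : Formula Ag :=
  l.foldr (fun p acc => p.1.dual (Formula.and p.2 acc)) (α.dual φ)

/-- IRR-theories. -/
def IRRTheory {Ag : Type} [Fintype Ag] (Γ : Set (Formula Ag)) : Prop :=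
  MCS Γ ∧ (∃ p : ℕ, Formula.nameF p ∈ Γ) ∧
    ∀ (l : List (BoxOp Ag × Formula Ag)) (α : BoxOp Ag) (φ : Formula Ag),
      zigzag l α φ ∈ Γ → ∃ q : ℕ, zigzag l α (Formula.and φ (Formula.nameF q)) ∈ Γ

/-- Diamond saturated set of MCSs. -/
def DiamondSaturated {Ag : Type} (X : Set (Set (Formula Ag))) : Prop :=
  ∀ Γ ∈ X, ∀ (α : BoxOp Ag) (φ : Formula Ag), α.dual φ ∈ Γ →
    ∃ Δ ∈ X, canR α Γ Δ ∧ φ ∈ Δ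

/-- The relational frame conditions of a TDS-frame. -/
structure IsTDSFrame (Ag W : Type) (Rbox : W → W → Prop) (Rag : Ag → W → W → Prop)
    (Rcoal : W → W → Prop) (RG : W → W → Prop) (RH : W → W → Prop)
    (Robl : Ag → W → W → Prop) : Prop where
  nonempty : Nonempty W
  box_equiv : Equivalence Rbox
  ag_equiv : ∀ i : Ag, Equivalence (Rag i)
  coal_equiv : Equivalence Rcoal
  c1 : ∀ (i : Ag) (w v : W), Rag i w v → Rbox w v
  c2 : ∀ u : Ag → W, (∀ i j : Ag, Rbox (u i) (u j)) → ∃ v : W, ∀ i : Ag, Rag i (u i) v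
  c3 : ∀ w v : W, Rcoal w v → ∀ i : Ag, Rag i w v
  g_trans : ∀ w u v : W, RG w u → RG u v → RG w v
  g_serial : ∀ w : W, ∃ v : W, RG w v
  h_conv : ∀ w v : W, RH w v ↔ RG v w
  t4 : ∀ w u v : W, RG w u → RG w v → RG u v ∨ u = v ∨ RG v u
  t5 : ∀ w u v : W, RH w u → RH w v → RH u v ∨ u = v ∨ RH v u
  t6 : ∀ w u v : W, RG w u → Rbox u v → ∃ z : W, Rcoal w z ∧ RG z v
  t7 : ∀ w u : W, Rbox w u → ¬ RG w u
  d8 : ∀ (i : Ag) (w v : W), Robl i w v → Rbox w v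
  d9 : ∀ (i : Ag) (w : W), ∃ v : W, Rbox w v ∧ ∀ u : W, Rag i v u → Robl i w u
  d10 : ∀ (i : Ag) (w v u z : W), Rbox w v → Rbox w u → Robl i u z → Robl i v z
  d11 : ∀ (i : Ag) (w v : W), Robl i w v →
      ∃ u : W, Rbox w u ∧ Rag i u v ∧ ∀ z : W, Rag i u z → Robl i w z

/-- The relational frame conditions of a TUS-frame (the non-deontic part of a
TDS-frame). -/
structure IsTUSFrame (Ag W : Type) (Rbox : W → W → Prop) (Rag : Ag → W → W → Prop)
    (Rcoal : W → W → Prop) (RG : W → W → Prop) (RH : W → W → Prop) : Prop where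
  nonempty : Nonempty W
  box_equiv : Equivalence Rbox
  ag_equiv : ∀ i : Ag, Equivalence (Rag i)
  coal_equiv : Equivalence Rcoal
  c1 : ∀ (i : Ag) (w v : W), Rag i w v → Rbox w v
  c2 : ∀ u : Ag → W, (∀ i j : Ag, Rbox (u i) (u j)) → ∃ v : W, ∀ i : Ag, Rag i (u i) v
  c3 : ∀ w v : W, Rcoal w v → ∀ i : Ag, Rag i w v
  g_trans : ∀ w u v : W, RG w u → RG u v → RG w v
  g_serial : ∀ w : W, ∃ v : W, RG w v
  h_conv : ∀ w v : W, RH w v ↔ RG v w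
  t4 : ∀ w u v : W, RG w u → RG w v → RG u v ∨ u = v ∨ RG v u
  t5 : ∀ w u v : W, RH w u → RH w v → RH u v ∨ u = v ∨ RH v u
  t6 : ∀ w u v : W, RG w u → Rbox u v → ∃ z : W, Rcoal w z ∧ RG z v
  t7 : ∀ w u : W, Rbox w u → ¬ RG w u

/-- A (bare) relational Kripke model for the language L_TDS. -/
structure KModel (Ag : Type) where
  W : Type
  Rbox : W → W → Prop
  Rag : Ag → W → W → Prop
  Rcoal : W → W → Prop
  RG : W → W → Prop
  RH : W → W → Prop
  Robl : Ag → W → W → Prop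
  val : ℕ → W → Prop

/-- Standard Kripke satisfaction. -/
def KModel.sat {Ag : Type} (M : KModel Ag) : Formula Ag → M.W → Prop
  | .var p, w => M.val p w
  | .neg φ, w => ¬ M.sat φ w
  | .and φ ψ, w => M.sat φ w ∧ M.sat ψ w
  | .box φ, w => ∀ u : M.W, M.Rbox w u → M.sat φ u
  | .agent i φ, w => ∀ u : M.W, M.Rag i w u → M.sat φ u
  | .coal φ, w => ∀ u : M.W, M.Rcoal w u → M.sat φ u
  | .G φ, w => ∀ u : M.W, M.RG w u → M.sat φ u
  | .H φ, w => ∀ u : M.W, M.RH w u → M.sat φ u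
  | .obl i φ, w => ∀ u : M.W, M.Robl i w u → M.sat φ u

/-- A TDS-model: a Kripke model whose frame is a TDS-frame. -/
structure TDSModel (Ag : Type) extends KModel Ag where
  frame : IsTDSFrame Ag W Rbox Rag Rcoal RG RH Robl

/-- Satisfaction on TDS-models. -/
abbrev TDSModel.sat {Ag : Type} (M : TDSModel Ag) : Formula Ag → M.W → Prop :=
  M.toKModel.sat

/-- The canonical model with domain restricted to a set `X` of theories. -/
def canonicalModel (Ag : Type) (X : Set (Set (Formula Ag))) : KModel Ag where
  W := X
  Rbox Γ Δ := canR BoxOp.box Γ.1 Δ.1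
  Rag i Γ Δ := canR (BoxOp.agent i) Γ.1 Δ.1
  Rcoal Γ Δ := canR BoxOp.coal Γ.1 Δ.1
  RG Γ Δ := canR BoxOp.G Γ.1 Δ.1
  RH Γ Δ := canR BoxOp.H Γ.1 Δ.1
  Robl i Γ Δ := canR (BoxOp.obl i) Γ.1 Δ.1
  val p Γ := Formula.var p ∈ Γ.1

/-- A temporal utilitarian STIT model (TUS-model). -/
structure TUSModel (Ag : Type) where
  W : Type
  Rbox : W → W → Prop
  Rag : Ag → W → W → Prop
  Rcoal : W → W → Prop
  RG : W → W → Prop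
  RH : W → W → Prop
  util : W → ℕ
  val : ℕ → W → Prop
  frame : IsTUSFrame Ag W Rbox Rag Rcoal RG RH

namespace TUSModel

variable {Ag : Type}

/-- The moment R_□(w). -/
def mom (M : TUSModel Ag) (w : M.W) : Set M.W := {u | M.Rbox w u}

/-- The choice cell R_[i](v). -/
def cell (M : TUSModel Ag) (i : Ag) (v : M.W) : Set M.W := {u | M.Rag i v u}

/-- The state R^s_[i](v) := ⋂_{k ≠ i} R_[k](v). -/
def state (M : TUSModel Ag) (i : Ag) (v : M.W) : Set M.W :=
  {u | ∀ k : Ag, k ≠ i → M.Rag k v u}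

/-- Weak preference ≤ between sets of worlds. -/
def pref (M : TUSModel Ag) (A B : Set M.W) : Prop :=
  ∀ a ∈ A, ∀ b ∈ B, M.util a ≤ M.util b

/-- Weak dominance ⪯ between sets of worlds, relative to the moment of `w`:
for every state included in the moment R_□(w), the restriction of `A` is weakly
preferred to the restriction of `B`. -/
def dom (M : TUSModel Ag) (i : Ag) (w : M.W) (A B : Set M.W) : Prop :=
  ∀ x : M.W, M.state i x ⊆ M.mom w → M.pref (A ∩ M.state i x) (B ∩ M.state i x)

/-- Strict dominance ≺. -/
def sdom (M : TUSModel Ag) (i : Ag) (w : M.W) (A B : Set M.W) : Prop :=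
  M.dom i w A B ∧ ¬ M.dom i w B A

/-- Satisfaction on TUS-models, with the dominance-based clause for ⊗_i. -/
def sat (M : TUSModel Ag) : Formula Ag → M.W → Prop
  | .var p, w => M.val p w
  | .neg φ, w => ¬ M.sat φ w
  | .and φ ψ, w => M.sat φ w ∧ M.sat ψ w
  | .box φ, w => ∀ u : M.W, M.Rbox w u → M.sat φ u
  | .agent i φ, w => ∀ u : M.W, M.Rag i w u → M.sat φ u
  | .coal φ, w => ∀ u : M.W, M.Rcoal w u → M.sat φ u
  | .G φ, w => ∀ u : M.W, M.RG w u → M.sat φ u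
  | .H φ, w => ∀ u : M.W, M.RH w u → M.sat φ u
  | .obl i φ, w =>
      ∀ v : M.W, M.cell i v ⊆ M.mom w → ¬ (M.cell i v ⊆ {u : M.W | M.sat φ u}) →
        ∃ z : M.W, M.cell i z ⊆ M.mom w ∧
          M.sdom i w (M.cell i v) (M.cell i z) ∧
          M.cell i z ⊆ {u : M.W | M.sat φ u} ∧
          ∀ x : M.W, M.cell i x ⊆ M.mom w →
            M.dom i w (M.cell i z) (M.cell i x) → M.cell i x ⊆ {u : M.W | M.sat φ u}

end TUSModel

/-- Replacing the deontic relations of a TDS-model by a utility function yields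
a TUS-model over the same worlds, relations and valuation. -/
def TDSModel.toTUS {Ag : Type} (M : TDSModel Ag) (util : M.W → ℕ) : TUSModel Ag where
  W := M.W
  Rbox := M.Rbox
  Rag := M.Rag
  Rcoal := M.Rcoal
  RG := M.RG
  RH := M.RH
  util := util
  val := M.val
  frame :=
    { nonempty := M.frame.nonempty
      box_equiv := M.frame.box_equiv
      ag_equiv := M.frame.ag_equiv
      coal_equiv := M.frame.coal_equiv
      c1 := M.frame.c1
      c2 := M.frame.c2
      c3 := M.frame.c3
      g_trans := M.frame.g_trans
      g_serial := M.frame.g_serial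
      h_conv := M.frame.h_conv
      t4 := M.frame.t4
      t5 := M.frame.t5
      t6 := M.frame.t6
      t7 := M.frame.t7 }

/-!
Given a TUS-model and a formula `φ`, we give it deontic relations that turn it into a
TDS-model agreeing with it on every subformula of `φ`. Viewed as a predicate on
propositions, the utilitarian clause for `⊗_i` at `w` is monotone and, because weak
dominance between choice cells of one moment is transitive (a consequence of the
independence of agents C2), closed under binary intersections. Hence the intersection of
the finitely many obligatory subformula extensions is obligatory, and `R_⊗i(w)` is taken to
be the union of the choice cells of the moment of `w` contained in it; a proposition from
the finite family then holds on `R_⊗i(w)` exactly when it is obligatory.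
-/

namespace Formula

variable {Ag : Type}

def subformulas : Formula Ag → List (Formula Ag)
  | var p => [var p]
  | neg ψ => neg ψ :: ψ.subformulas
  | and ψ χ => and ψ χ :: (ψ.subformulas ++ χ.subformulas)
  | box ψ => box ψ :: ψ.subformulas
  | agent i ψ => agent i ψ :: ψ.subformulas
  | coal ψ => coal ψ :: ψ.subformulas
  | G ψ => G ψ :: ψ.subformulas
  | H ψ => H ψ :: ψ.subformulas
  | obl i ψ => obl i ψ :: ψ.subformulas

theorem mem_subformulas_self (φ : Formula Ag) : φ ∈ φ.subformulas := by
  cases φ <;> simp [subformulas]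

end Formula

namespace TUSModel

open Set

variable {Ag : Type} (M : TUSModel Ag)

def Secures (i : Ag) (w z : M.W) (A : Set M.W) : Prop :=
  M.cell i z ⊆ A ∧
    ∀ x, M.cell i x ⊆ M.mom w → M.dom i w (M.cell i z) (M.cell i x) → M.cell i x ⊆ A

def Obligatory (i : Ag) (w : M.W) (A : Set M.W) : Prop :=
  ∀ v, M.cell i v ⊆ M.mom w → ¬ M.cell i v ⊆ A →
    ∃ z, M.cell i z ⊆ M.mom w ∧ M.sdom i w (M.cell i v) (M.cell i z) ∧ M.Secures i w z A

def deonticRel (S : Set (Set M.W)) (i : Ag) (w u : M.W) : Prop :=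
  M.Rbox w u ∧ M.cell i u ⊆ ⋂₀ {A ∈ S | M.Obligatory i w A}

variable {M} {i : Ag} {w : M.W} {A B : Set M.W}

theorem sat_obl_iff {ψ : Formula Ag} :
    M.sat (.obl i ψ) w ↔ M.Obligatory i w {u | M.sat ψ u} :=
  Iff.rfl

theorem mem_cell_self (i : Ag) (v : M.W) : v ∈ M.cell i v :=
  (M.frame.ag_equiv i).refl v

theorem cell_eq_of_mem {v u : M.W} (h : u ∈ M.cell i v) : M.cell i u = M.cell i v :=
  ext fun _ =>
    ⟨(M.frame.ag_equiv i).trans h, (M.frame.ag_equiv i).trans ((M.frame.ag_equiv i).symm h)⟩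

theorem mem_state_self (i : Ag) (x : M.W) : x ∈ M.state i x :=
  fun k _ => (M.frame.ag_equiv k).refl x

theorem mom_eq_of_Rbox {a b : M.W} (h : M.Rbox a b) : M.mom a = M.mom b :=
  ext fun _ => ⟨M.frame.box_equiv.trans (M.frame.box_equiv.symm h), M.frame.box_equiv.trans h⟩

theorem cell_subset_mom_of_Rbox {u : M.W} (h : M.Rbox w u) : M.cell i u ⊆ M.mom w :=
  fun _ hx => M.frame.box_equiv.trans h (M.frame.c1 i u _ hx)

theorem cell_inter_state_nonempty {b x : M.W} (h : M.Rbox x b) :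
    (M.cell i b ∩ M.state i x).Nonempty := by
  classical
  let u : Ag → M.W := Function.update (fun _ => x) i b
  have hxu : ∀ k, M.Rbox x (u k) := by
    intro k
    by_cases hk : k = i
    · subst hk; simpa [u] using h
    · simpa [u, Function.update_of_ne hk] using M.frame.box_equiv.refl x
  obtain ⟨y, hy⟩ := M.frame.c2 u fun j k =>
    M.frame.box_equiv.trans (M.frame.box_equiv.symm (hxu j)) (hxu k)
  refine ⟨y, show M.Rag i b y by simpa [u] using hy i, fun k hk => ?_⟩
  simpa [u, Function.update_of_ne hk] using hy k

theorem dom_trans {a b c : M.W} (hb : M.cell i b ⊆ M.mom w)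
    (hab : M.dom i w (M.cell i a) (M.cell i b)) (hbc : M.dom i w (M.cell i b) (M.cell i c)) :
    M.dom i w (M.cell i a) (M.cell i c) := by
  intro x hx p hp r hr
  have hxb : M.Rbox x b :=
    M.frame.box_equiv.trans (M.frame.box_equiv.symm (hx (mem_state_self i x)))
      (hb (mem_cell_self i b))
  obtain ⟨y, hy⟩ := cell_inter_state_nonempty hxb
  exact (hab x hx p hp y hy).trans (hbc x hx y hy r hr)

theorem sdom_of_sdom_of_dom {v z z' : M.W} (hz : M.cell i z ⊆ M.mom w)
    (hz' : M.cell i z' ⊆ M.mom w) (hvz : M.sdom i w (M.cell i v) (M.cell i z))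
    (hzz' : M.dom i w (M.cell i z) (M.cell i z')) :
    M.sdom i w (M.cell i v) (M.cell i z') :=
  ⟨dom_trans hz hvz.1 hzz', fun h => hvz.2 (dom_trans hz' hzz' h)⟩

theorem Secures.inter {z : M.W} (hA : M.Secures i w z A) (hB : M.Secures i w z B) :
    M.Secures i w z (A ∩ B) :=
  ⟨subset_inter hA.1 hB.1, fun x hx hd => subset_inter (hA.2 x hx hd) (hB.2 x hx hd)⟩

theorem Secures.of_dom {z z' : M.W} (h : M.Secures i w z A) (hz' : M.cell i z' ⊆ M.mom w)
    (hd : M.dom i w (M.cell i z) (M.cell i z')) : M.Secures i w z' A :=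
  ⟨h.2 z' hz' hd, fun x hx hd' => h.2 x hx (dom_trans hz' hd hd')⟩

theorem obligatory_univ : M.Obligatory i w univ :=
  fun _ _ h => (h (subset_univ _)).elim

theorem Obligatory.mono_of_cells (hA : M.Obligatory i w A)
    (h : ∀ x, M.cell i x ⊆ M.mom w → M.cell i x ⊆ A → M.cell i x ⊆ B) :
    M.Obligatory i w B := by
  intro v hv hvB
  obtain ⟨z, hz, hvz, hzA, hzA'⟩ := hA v hv fun hvA => hvB (h v hv hvA)
  exact ⟨z, hz, hvz, h z hz hzA, fun x hx hd => h x hx (hzA' x hx hd)⟩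

theorem Obligatory.mono (hA : M.Obligatory i w A) (hAB : A ⊆ B) : M.Obligatory i w B :=
  hA.mono_of_cells fun _ _ hx => hx.trans hAB

theorem Obligatory.exists_secures_inter (hA : M.Obligatory i w A) (hB : M.Obligatory i w B)
    {v : M.W} (hv : M.cell i v ⊆ M.mom w) (hvA : ¬ M.cell i v ⊆ A) :
    ∃ z, M.cell i z ⊆ M.mom w ∧ M.sdom i w (M.cell i v) (M.cell i z) ∧
      M.Secures i w z (A ∩ B) := by
  obtain ⟨z₁, hz₁, hvz₁, hz₁A⟩ := hA v hv hvA
  by_cases hz₁B : M.Secures i w z₁ B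
  · exact ⟨z₁, hz₁, hvz₁, hz₁A.inter hz₁B⟩
  -- Some cell weakly dominating `z₁` (or `z₁` itself) escapes `B`; the obligation `B`
  -- lifts it to a cell `z₂` securing `B`, and `z₂` still secures `A` since it dominates `z₁`.
  obtain ⟨x, hx, hxB, hz₁x⟩ : ∃ x, M.cell i x ⊆ M.mom w ∧ ¬ M.cell i x ⊆ B ∧
      ∀ y, M.cell i y ⊆ M.mom w → M.dom i w (M.cell i x) (M.cell i y) →
        M.dom i w (M.cell i z₁) (M.cell i y) := by
    by_cases hz₁B' : M.cell i z₁ ⊆ B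
    · obtain ⟨x, hx, hd, hxB⟩ : ∃ x, M.cell i x ⊆ M.mom w ∧
          M.dom i w (M.cell i z₁) (M.cell i x) ∧ ¬ M.cell i x ⊆ B := by
        simpa [Secures, hz₁B'] using hz₁B
      exact ⟨x, hx, hxB, fun _ _ => dom_trans hx hd⟩
    · exact ⟨z₁, hz₁, hz₁B', fun _ _ => id⟩
  obtain ⟨z₂, hz₂, hxz₂, hz₂B⟩ := hB x hx hxB
  have hz₁z₂ := hz₁x z₂ hz₂ hxz₂.1
  exact ⟨z₂, hz₂, sdom_of_sdom_of_dom hz₁ hz₂ hvz₁ hz₁z₂,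
    (hz₁A.of_dom hz₂ hz₁z₂).inter hz₂B⟩

theorem Obligatory.inter (hA : M.Obligatory i w A) (hB : M.Obligatory i w B) :
    M.Obligatory i w (A ∩ B) := by
  intro v hv hvAB
  by_cases hvA : M.cell i v ⊆ A
  · rw [inter_comm A B]
    exact hB.exists_secures_inter hA hv fun hvB => hvAB (subset_inter hvA hvB)
  · exact hA.exists_secures_inter hB hv hvA

theorem Obligatory.sInter {S : Set (Set M.W)} (hS : S.Finite)
    (h : ∀ A ∈ S, M.Obligatory i w A) : M.Obligatory i w (⋂₀ S) := by
  induction S, hS using Set.Finite.induction_on with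
  | empty => simpa using obligatory_univ
  | insert _ _ ih =>
      rw [sInter_insert]
      exact (h _ (mem_insert _ _)).inter (ih fun A hA => h A (mem_insert_of_mem _ hA))

theorem obligatory_iff_of_Rbox {a b : M.W} (h : M.Rbox a b) :
    M.Obligatory i a A ↔ M.Obligatory i b A := by
  simp only [Obligatory, Secures, sdom, dom, mom_eq_of_Rbox h]

variable {S : Set (Set M.W)}

theorem obligatory_deonticRel (hS : S.Finite) :
    M.Obligatory i w {u | M.deonticRel S i w u} := by
  have hcore : M.Obligatory i w (⋂₀ {A ∈ S | M.Obligatory i w A}) :=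
    .sInter (hS.subset (sep_subset _ _)) fun _ hA => hA.2
  refine hcore.mono_of_cells fun x hx hxC u hu => ⟨hx hu, ?_⟩
  rwa [cell_eq_of_mem hu]

theorem deonticRel_subset_iff (hS : S.Finite) (hA : A ∈ S) :
    {u | M.deonticRel S i w u} ⊆ A ↔ M.Obligatory i w A :=
  ⟨(obligatory_deonticRel hS).mono, fun h u hu => hu.2 (mem_cell_self i u) A ⟨hA, h⟩⟩

theorem deonticRel_eq_of_Rbox {a b : M.W} (h : M.Rbox a b) :
    M.deonticRel S i a = M.deonticRel S i b := by
  ext u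
  have hu : M.Rbox a u ↔ M.Rbox b u := Set.ext_iff.1 (mom_eq_of_Rbox h) u
  simp only [deonticRel, hu, obligatory_iff_of_Rbox h]

theorem exists_cell_subset_deonticRel (hS : S.Finite) (i : Ag) (w : M.W) :
    ∃ v, M.Rbox w v ∧ ∀ u, M.Rag i v u → M.deonticRel S i w u := by
  by_cases h : M.cell i w ⊆ {u | M.deonticRel S i w u}
  · exact ⟨w, M.frame.box_equiv.refl w, fun _ hu => h hu⟩
  · obtain ⟨z, hz, -, hzR, -⟩ :=
      obligatory_deonticRel hS w (cell_subset_mom_of_Rbox (M.frame.box_equiv.refl w)) h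
    exact ⟨z, hz (mem_cell_self i z), fun _ hu => hzR hu⟩

theorem cell_subset_deonticRel {v : M.W} (h : M.deonticRel S i w v) :
    M.cell i v ⊆ {u | M.deonticRel S i w u} := fun u hu =>
  ⟨M.frame.box_equiv.trans h.1 (M.frame.c1 i v u hu), by rw [cell_eq_of_mem hu]; exact h.2⟩

variable (M) in
def toTDS (S : Set (Set M.W)) (hS : S.Finite) : TDSModel Ag where
  W := M.W
  Rbox := M.Rbox
  Rag := M.Rag
  Rcoal := M.Rcoal
  RG := M.RG
  RH := M.RH
  Robl := M.deonticRel S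
  val := M.val
  frame :=
    { nonempty := M.frame.nonempty
      box_equiv := M.frame.box_equiv
      ag_equiv := M.frame.ag_equiv
      coal_equiv := M.frame.coal_equiv
      c1 := M.frame.c1
      c2 := M.frame.c2
      c3 := M.frame.c3
      g_trans := M.frame.g_trans
      g_serial := M.frame.g_serial
      h_conv := M.frame.h_conv
      t4 := M.frame.t4
      t5 := M.frame.t5
      t6 := M.frame.t6
      t7 := M.frame.t7
      d8 := fun _ _ _ h => h.1
      d9 := exists_cell_subset_deonticRel hS
      d10 := fun _ _ _ _ _ hwv hwu h => by
        rwa [deonticRel_eq_of_Rbox (M.frame.box_equiv.trans (M.frame.box_equiv.symm hwu) hwv)]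
          at h
      d11 := fun _ _ v h => ⟨v, h.1, (M.frame.ag_equiv _).refl v, cell_subset_deonticRel h⟩ }

theorem sat_toTDS_iff (hS : S.Finite) {ψ : Formula Ag}
    (hψ : ∀ χ ∈ ψ.subformulas, {u | M.sat χ u} ∈ S) (w : M.W) :
    (M.toTDS S hS).sat ψ w ↔ M.sat ψ w := by
  induction ψ generalizing w with
  | var p => rfl
  | neg ψ ih =>
      simp only [Formula.subformulas, List.forall_mem_cons] at hψ
      exact not_congr (ih hψ.2 w)
  | and ψ χ ihψ ihχ =>
      simp only [Formula.subformulas, List.forall_mem_cons, List.forall_mem_append] at hψ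
      exact and_congr (ihψ hψ.2.1 w) (ihχ hψ.2.2 w)
  | box ψ ih | agent _ ψ ih | coal ψ ih | G ψ ih | H ψ ih =>
      simp only [Formula.subformulas, List.forall_mem_cons] at hψ
      exact forall_congr' fun u => imp_congr_right fun _ => ih hψ.2 u
  | obl i ψ ih =>
      simp only [Formula.subformulas, List.forall_mem_cons] at hψ
      calc (M.toTDS S hS).sat (.obl i ψ) w ↔ {u | M.deonticRel S i w u} ⊆ {u | M.sat ψ u} :=
            forall_congr' fun u => imp_congr_right fun _ => ih hψ.2 u
        _ ↔ M.Obligatory i w {u | M.sat ψ u} :=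
            deonticRel_subset_iff hS (hψ.2 ψ (Formula.mem_subformulas_self ψ))
        _ ↔ M.sat (.obl i ψ) w := sat_obl_iff.symm

end TUSModel

theorem tds_valid_implies_tus_valid_general {Ag : Type}
    (φ : Formula Ag)
    (h : ∀ (M : TDSModel Ag) (w : M.W), M.sat φ w) :
    ∀ (M : TUSModel Ag) (w : M.W), M.sat φ w := by
  intro M w
  let S : Set (Set M.W) := (fun χ => {u | M.sat χ u}) '' {χ | χ ∈ φ.subformulas}
  have hS : S.Finite := φ.subformulas.finite_toSet.image _
  exact (M.sat_toTDS_iff hS (fun χ hχ => Set.mem_image_of_mem _ hχ) w).1 (h (M.toTDS S hS) w)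

/-- **Validity transfer from neutral to utilitarian frames**: every formula
valid on all TDS-models is valid on all TUS-models. -/
theorem tds_valid_implies_tus_valid {Ag : Type} [Fintype Ag] [Nonempty Ag]
    (φ : Formula Ag)
    (h : ∀ (M : TDSModel Ag) (w : M.W), M.sat φ w) :
    ∀ (M : TUSModel Ag) (w : M.W), M.sat φ w :=
  tds_valid_implies_tus_valid_general φ h
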